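/- arXiv:math/0604541 — 4 statements merged into one kernel-verified Lean document; each statement's English description precedes it below -/
import Mathlib

section
/- Suppose M² is a totally umbilical surface in M³(κ,τ) with κ ≠ 4τ², with shape operator S = λ·id, angle function θ nowhere zero on an open set, tangent vector T with ‖T‖ = sin θ. If the equations T[λ] = −(κ−4τ²)cos θ sin²θ, (JT)[λ] = 0, T[θ] = λ sin θ, (JT)[θ] = τ sin θ hold and [T,JT] = 0, then τ = 0. -/
/-- Vector fields on ℝ². -/
abbrev VF2 := (Fin 2 → ℝ) → (Fin 2 → ℝ)

/-- Directional derivative of a function along a vector field. -/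
noncomputable def dirDeriv (X : VF2) (f : (Fin 2 → ℝ) → ℝ) : (Fin 2 → ℝ) → ℝ :=
  fun p => fderiv ℝ f p (X p)

/-- Lie bracket of vector fields on ℝ². -/
noncomputable def lieBracketVF2 (X Y : VF2) : VF2 :=
  fun p => fderiv ℝ Y p (X p) - fderiv ℝ X p (Y p)

lemma dirDeriv_dirDeriv (f : (Fin 2 → ℝ) → ℝ) (hf : ContDiff ℝ (⊤ : ℕ∞) f) (X Y : VF2)
    (hY : ContDiff ℝ (⊤ : ℕ∞) Y) (x : Fin 2 → ℝ) :
    dirDeriv X (dirDeriv Y f) x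
      = fderiv ℝ (fderiv ℝ f) x (X x) (Y x) + fderiv ℝ f x (fderiv ℝ Y x (X x)) := by
  have hc : HasFDerivAt (fderiv ℝ f) (fderiv ℝ (fderiv ℝ f) x) x :=
    (((hf.fderiv_right (m := 1) (by exact WithTop.coe_le_coe.mpr le_top)).differentiable (by simp)) x).hasFDerivAt
  have hu : HasFDerivAt Y (fderiv ℝ Y x) x := ((hY.differentiable (by simp)) x).hasFDerivAt
  have h2 := (hc.clm_apply hu).fderiv
  show fderiv ℝ (fun p => fderiv ℝ f p (Y p)) x (X x) = _
  rw [h2]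
  simp [ContinuousLinearMap.add_apply, ContinuousLinearMap.comp_apply,
    ContinuousLinearMap.flip_apply]
  ring

lemma dirDeriv_comm (f : (Fin 2 → ℝ) → ℝ) (hf : ContDiff ℝ (⊤ : ℕ∞) f) (X Y : VF2)
    (hX : ContDiff ℝ (⊤ : ℕ∞) X) (hY : ContDiff ℝ (⊤ : ℕ∞) Y) (x : Fin 2 → ℝ) :
    dirDeriv X (dirDeriv Y f) x - dirDeriv Y (dirDeriv X f) x
      = fderiv ℝ f x (lieBracketVF2 X Y x) := by
  rw [dirDeriv_dirDeriv f hf X Y hY x, dirDeriv_dirDeriv f hf Y X hX x]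
  have hsym : fderiv ℝ (fderiv ℝ f) x (X x) (Y x) = fderiv ℝ (fderiv ℝ f) x (Y x) (X x) :=
    second_derivative_symmetric (fun y => ((hf.differentiable (by simp)) y).hasFDerivAt)
      ((((hf.fderiv_right (m := 1) (by exact WithTop.coe_le_coe.mpr le_top)).differentiable (by simp)) x).hasFDerivAt) (X x) (Y x)
  rw [hsym]
  simp [lieBracketVF2, map_sub]

/-- If a totally umbilical surface in M³(κ,τ), κ ≠ 4τ², carries (in local coordinates)
vector fields T, JT with [T,JT] = 0, a nowhere vanishing angle function θ and umbilicity
factor λ satisfying T[λ] = −(κ−4τ²)cos θ sin²θ, (JT)[λ] = 0, T[θ] = λ sin θ,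
(JT)[θ] = τ sin θ, then τ = 0. -/
theorem umbilical_forces_tau_zero
    (κ τ : ℝ) (hκτ : κ ≠ 4 * τ^2)
    (U : Set (Fin 2 → ℝ)) (hU : IsOpen U) (hne : U.Nonempty)
    (T JT : VF2) (lam θ : (Fin 2 → ℝ) → ℝ)
    (hTsm : ContDiff ℝ (⊤ : ℕ∞) T) (hJTsm : ContDiff ℝ (⊤ : ℕ∞) JT)
    (hlsm : ContDiff ℝ (⊤ : ℕ∞) lam) (hθsm : ContDiff ℝ (⊤ : ℕ∞) θ)
    (hsin : ∀ p ∈ U, Real.sin (θ p) ≠ 0)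
    (h1 : ∀ p ∈ U, dirDeriv T lam p = -(κ - 4*τ^2) * Real.cos (θ p) * Real.sin (θ p)^2)
    (h2 : ∀ p ∈ U, dirDeriv JT lam p = 0)
    (h3 : ∀ p ∈ U, dirDeriv T θ p = lam p * Real.sin (θ p))
    (h4 : ∀ p ∈ U, dirDeriv JT θ p = τ * Real.sin (θ p))
    (hbr : ∀ p ∈ U, lieBracketVF2 T JT p = 0) :
    τ = 0 := by
  by_contra hτ
  have hc : κ - 4 * τ^2 ≠ 0 := sub_ne_zero.mpr hκτ
  -- Step A : 3 cos² θ = 1 on U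
  have stepA : ∀ p ∈ U, Real.cos (θ p) ^ 2 = 1/3 := by
    intro p hp
    have hθd : HasFDerivAt θ (fderiv ℝ θ p) p := ((hθsm.differentiable (by simp)) p).hasFDerivAt
    -- T[(JT)[lam]] p = 0 since (JT)[lam] = 0 on U
    have e1 : dirDeriv T (dirDeriv JT lam) p = 0 := by
      have hev : dirDeriv JT lam =ᶠ[nhds p] (fun _ => (0:ℝ)) := by
        filter_upwards [hU.mem_nhds hp] with q hq using h2 q hq
      show fderiv ℝ (dirDeriv JT lam) p (T p) = 0
      rw [hev.fderiv_eq, fderiv_fun_const]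
      simp
    -- (JT)[T[lam]] p
    set s := θ p with hs
    have hφ : HasDerivAt (fun t => -(κ - 4*τ^2) * Real.cos t * Real.sin t ^ 2)
        ((-(κ - 4*τ^2) * (-Real.sin s)) * Real.sin s ^ 2
          + (-(κ - 4*τ^2) * Real.cos s) * (2 * Real.sin s ^ 1 * Real.cos s)) s := by
      exact (((Real.hasDerivAt_cos s).const_mul (-(κ - 4*τ^2))).mul
        ((Real.hasDerivAt_sin s).pow 2)).congr_deriv (by simp only [Pi.pow_apply]; ring)
    have hcomp := hφ.comp_hasFDerivAt p hθd
    have hev : dirDeriv T lam =ᶠ[nhds p]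
        (fun q => -(κ - 4*τ^2) * Real.cos (θ q) * Real.sin (θ q) ^ 2) := by
      filter_upwards [hU.mem_nhds hp] with q hq using h1 q hq
    have e2 : dirDeriv JT (dirDeriv T lam) p
        = ((-(κ - 4*τ^2) * (-Real.sin s)) * Real.sin s ^ 2
          + (-(κ - 4*τ^2) * Real.cos s) * (2 * Real.sin s ^ 1 * Real.cos s))
          * (τ * Real.sin s) := by
      have hcomp' : HasFDerivAt (fun q => -(κ - 4*τ^2) * Real.cos (θ q) * Real.sin (θ q) ^ 2)
          (((-(κ - 4*τ^2) * (-Real.sin s)) * Real.sin s ^ 2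
            + (-(κ - 4*τ^2) * Real.cos s) * (2 * Real.sin s ^ 1 * Real.cos s))
            • fderiv ℝ θ p) p := hcomp
      show fderiv ℝ (dirDeriv T lam) p (JT p) = _
      rw [hev.fderiv_eq, hcomp'.fderiv]
      have h4' : fderiv ℝ θ p (JT p) = τ * Real.sin s := h4 p hp
      simp only [ContinuousLinearMap.smul_apply, smul_eq_mul, h4']
    have hbr0 : dirDeriv T (dirDeriv JT lam) p - dirDeriv JT (dirDeriv T lam) p = 0 := by
      rw [dirDeriv_comm lam hlsm T JT hTsm hJTsm p, hbr p hp]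
      simp
    rw [e1, e2] at hbr0
    have hsin2 : Real.sin s ≠ 0 := hsin p hp
    have hE : ((κ - 4*τ^2) * τ * Real.sin s ^ 2) * (Real.sin s ^ 2 - 2 * Real.cos s ^ 2) = 0 := by
      linear_combination -hbr0
    have hne6 : (κ - 4*τ^2) * τ * Real.sin s ^ 2 ≠ 0 :=
      mul_ne_zero (mul_ne_zero hc hτ) (pow_ne_zero 2 hsin2)
    have hkey : Real.sin s ^ 2 - 2 * Real.cos s ^ 2 = 0 :=
      (mul_eq_zero.mp hE).resolve_left hne6
    have := Real.sin_sq_add_cos_sq s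
    nlinarith
  -- Step B : differentiate the constant cos²θ along JT
  obtain ⟨p, hp⟩ := hne
  have hθd : HasFDerivAt θ (fderiv ℝ θ p) p := ((hθsm.differentiable (by simp)) p).hasFDerivAt
  have hψ : HasDerivAt (fun t => Real.cos t ^ 2)
      (2 * Real.cos (θ p) ^ 1 * (-Real.sin (θ p))) (θ p) :=
    (Real.hasDerivAt_cos (θ p)).pow 2
  have hcomp := hψ.comp_hasFDerivAt p hθd
  have hev : (fun q => Real.cos (θ q) ^ 2) =ᶠ[nhds p] (fun _ => (1:ℝ)/3) := by
    filter_upwards [hU.mem_nhds hp] with q hq using stepA q hq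
  have hzero : fderiv ℝ (fun q => Real.cos (θ q) ^ 2) p (JT p) = 0 := by
    rw [hev.fderiv_eq, fderiv_fun_const]; simp
  have hcomp' : HasFDerivAt (fun q => Real.cos (θ q) ^ 2)
      ((2 * Real.cos (θ p) ^ 1 * (-Real.sin (θ p))) • fderiv ℝ θ p) p := hcomp
  rw [hcomp'.fderiv] at hzero
  have h4p : fderiv ℝ θ p (JT p) = τ * Real.sin (θ p) := h4 p hp
  simp only [ContinuousLinearMap.smul_apply, smul_eq_mul, h4p] at hzero
  have hsin2 : Real.sin (θ p) ≠ 0 := hsin p hp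
  have hE2 : Real.cos (θ p) * (τ * Real.sin (θ p) ^ 2 * (-2)) = 0 := by
    linear_combination hzero
  have hcos0 : Real.cos (θ p) = 0 :=
    (mul_eq_zero.mp hE2).resolve_right
      (mul_ne_zero (mul_ne_zero hτ (pow_ne_zero 2 hsin2)) (by norm_num))
  have := stepA p hp
  rw [hcos0] at this
  norm_num at this
end

section
/- Let λ, θ : I → ℝ be smooth with sin θ > 0, satisfying λ' = −κ cos θ sin θ and θ' = λ on an interval I, with κ ≠ 0. If λ is a polynomial function of u, then λ ≡ 0 and cos θ ≡ 0 (i.e. θ ≡ π/2 modulo 2π). -/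
/-!
With `θ' = λ` the system is the pendulum equation `θ'' = -(κ/2) sin 2θ`, whose energy
`λ² - (κ/2) cos 2θ` is a constant `c`. Since `λ' = -(κ/2) sin 2θ`, a polynomial `λ = P` then
satisfies the polynomial identity `P'² + (P² - c)² = κ²/4`, whose left side has degree `4 deg P`.
So `λ` is constant; then `λ' = 0` forces `cos θ = 0` (as `sin θ > 0`), and differentiating
`cos θ = 0` gives `λ sin θ = 0`, i.e. `λ = 0`.
-/

open Polynomial Real Set

namespace Polynomial

variable {R : Type*} [CommRing R] [IsDomain R]

theorem natDegree_derivative_sq_add_sq_sub_C (P : R[X]) (c : R) :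
    (derivative P ^ 2 + (P ^ 2 - C c) ^ 2).natDegree = 4 * P.natDegree := by
  have hsq : ((P ^ 2 - C c) ^ 2).natDegree = 4 * P.natDegree := by
    rw [natDegree_pow, natDegree_sub_C, natDegree_pow]; ring
  rcases Nat.eq_zero_or_pos P.natDegree with hP | hP
  · rw [derivative_of_natDegree_zero hP, zero_pow two_ne_zero, zero_add, hsq]
  · have hder : (derivative P ^ 2).natDegree < 4 * P.natDegree := by
      rw [natDegree_pow]
      have := natDegree_derivative_le P
      omega
    rw [natDegree_add_eq_right_of_natDegree_lt (hsq ▸ hder), hsq]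

end Polynomial

theorem HasDerivAt.unique_of_eqOn {𝕜 F : Type*} [NontriviallyNormedField 𝕜]
    [NormedAddCommGroup F] [NormedSpace 𝕜 F] {f g : 𝕜 → F} {f' g' : F} {s : Set 𝕜} {u : 𝕜}
    (hs : IsOpen s) (hfg : EqOn f g s) (hu : u ∈ s)
    (hf : HasDerivAt f f' u) (hg : HasDerivAt g g' u) : f' = g' :=
  hf.unique (hg.congr_of_eventuallyEq (hfg.eventuallyEq_of_mem (hs.mem_nhds hu)))

section PendulumEquation

variable {κ : ℝ} {lam θ : ℝ → ℝ} {s : Set ℝ}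

theorem hasDerivAt_pendulum_energy {u : ℝ}
    (hlam : HasDerivAt lam (-κ * cos (θ u) * sin (θ u)) u) (hθ : HasDerivAt θ (lam u) u) :
    HasDerivAt (fun v => lam v ^ 2 - κ / 2 * cos (2 * θ v)) 0 u := by
  refine ((hlam.pow 2).sub (((hθ.const_mul 2).cos).const_mul (κ / 2))).congr_deriv ?_
  rw [sin_two_mul]
  ring

theorem exists_pendulum_energy_eq (hs : IsOpen s) (hs' : IsPreconnected s)
    (hlam : ∀ u ∈ s, HasDerivAt lam (-κ * cos (θ u) * sin (θ u)) u)
    (hθ : ∀ u ∈ s, HasDerivAt θ (lam u) u) :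
    ∃ c, ∀ u ∈ s, lam u ^ 2 - κ / 2 * cos (2 * θ u) = c :=
  hs.exists_is_const_of_deriv_eq_zero hs'
    (fun u hu => (hasDerivAt_pendulum_energy (hlam u hu) (hθ u hu)).differentiableAt
      |>.differentiableWithinAt)
    (fun u hu => (hasDerivAt_pendulum_energy (hlam u hu) (hθ u hu)).deriv)

theorem derivative_sq_add_sq_sub_C_eq_of_pendulum_energy_eq (hs : IsOpen s) (hs' : s.Infinite)
    (hlam : ∀ u ∈ s, HasDerivAt lam (-κ * cos (θ u) * sin (θ u)) u)
    {P : ℝ[X]} (hP : ∀ u ∈ s, lam u = P.eval u)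
    {c : ℝ} (hc : ∀ u ∈ s, lam u ^ 2 - κ / 2 * cos (2 * θ u) = c) :
    derivative P ^ 2 + (P ^ 2 - C c) ^ 2 = C (κ ^ 2 / 4) := by
  refine eq_of_infinite_eval_eq _ _ (hs'.mono fun u hu => ?_)
  have hP' : (derivative P).eval u = -κ * cos (θ u) * sin (θ u) :=
    HasDerivAt.unique_of_eqOn hs (fun v hv => (hP v hv).symm) hu (P.hasDerivAt u) (hlam u hu)
  simp only [mem_ofPred_eq, eval_add, eval_pow, eval_sub, eval_C, hP', ← hP u hu, ← hc u hu]
  rw [cos_two_mul]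
  linear_combination κ ^ 2 * cos (θ u) ^ 2 * sin_sq_add_cos_sq (θ u)

theorem eq_zero_and_cos_eq_zero_of_eqOn_const (hκ : κ ≠ 0) (hs : IsOpen s)
    (hlam : ∀ u ∈ s, HasDerivAt lam (-κ * cos (θ u) * sin (θ u)) u)
    (hθ : ∀ u ∈ s, HasDerivAt θ (lam u) u) (hsin : ∀ u ∈ s, 0 < sin (θ u))
    {p : ℝ} (hconst : EqOn lam (fun _ => p) s) :
    ∀ u ∈ s, lam u = 0 ∧ cos (θ u) = 0 := by
  have hcos : ∀ u ∈ s, cos (θ u) = 0 := fun u hu => by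
    have h := HasDerivAt.unique_of_eqOn hs hconst hu (hlam u hu) (hasDerivAt_const u p)
    simpa [hκ, (hsin u hu).ne'] using h
  refine fun u hu => ⟨?_, hcos u hu⟩
  have h := HasDerivAt.unique_of_eqOn hs hcos hu (hθ u hu).cos (hasDerivAt_const u 0)
  simpa [(hsin u hu).ne'] using h

end PendulumEquation

/-- ODE lemma: if smooth λ, θ on an interval satisfy λ' = −κ cos θ sin θ, θ' = λ,
sin θ > 0, κ ≠ 0, and λ is a polynomial function, then λ ≡ 0 and cos θ ≡ 0. -/
theorem polynomial_lambda_vanishes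
    (κ : ℝ) (hκ : κ ≠ 0) (a b : ℝ) (hab : a < b)
    (lam θ : ℝ → ℝ)
    (hlam : ∀ u ∈ Set.Ioo a b,
      HasDerivAt lam (-κ * Real.cos (θ u) * Real.sin (θ u)) u)
    (hθ : ∀ u ∈ Set.Ioo a b, HasDerivAt θ (lam u) u)
    (hsin : ∀ u ∈ Set.Ioo a b, Real.sin (θ u) > 0)
    (hpoly : ∃ P : Polynomial ℝ, ∀ u ∈ Set.Ioo a b, lam u = P.eval u) :
    ∀ u ∈ Set.Ioo a b, lam u = 0 ∧ Real.cos (θ u) = 0 := by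
  obtain ⟨P, hP⟩ := hpoly
  obtain ⟨c, hc⟩ := exists_pendulum_energy_eq isOpen_Ioo isPreconnected_Ioo hlam hθ
  have hdeg : P.natDegree = 0 := by
    have h := congrArg natDegree <|
      derivative_sq_add_sq_sub_C_eq_of_pendulum_energy_eq isOpen_Ioo (Ioo_infinite hab) hlam hP hc
    rw [natDegree_derivative_sq_add_sq_sub_C, natDegree_C] at h
    omega
  obtain ⟨p, rfl⟩ := natDegree_eq_zero.mp hdeg
  exact eq_zero_and_cos_eq_zero_of_eqOn_const hκ isOpen_Ioo hlam hθ hsin fun u hu => by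
    rw [hP u hu, eval_C]
end

section
/- Let c > 0 and define θ(u) = arctan(2c e^{cu}/(1−c²+e^{2cu})) on an interval where 1−c²+e^{2cu} > 0, and λ(u) = θ'(u)/sin θ(u). Then λ and θ satisfy λ² + sin²θ = c² and θ' = λ sin θ. -/
open Real

/-- θ(u) = arctan(2c e^{cu}/(1−c²+e^{2cu})). -/
noncomputable def thetaS (c : ℝ) (u : ℝ) : ℝ :=
  arctan (2 * c * exp (c * u) / (1 - c^2 + exp (2 * c * u)))

/-- λ(u) = θ'(u)/sin θ(u). -/
noncomputable def lamS (c : ℝ) (u : ℝ) : ℝ := deriv (thetaS c) u / sin (thetaS c u)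

/-!
Write `θ = arctan (N / D)` with `N = 2c e^{cu}` and `D = 1 - c² + e^{2cu}`. Then
`sin² θ = N² / (N² + D²)` and `θ' = (N' D - N D') / (N² + D²) = 2c² e^{cu} (1 - c² - e^{2cu}) / (N² + D²)`,
and `θ'² + sin⁴ θ = c² sin² θ` reduces to the polynomial identity
`(1 - c² - E²)² + 4E² = (1 - c² + E²)² + 4c²E²` in `E = e^{cu}`.
Dividing by `sin² θ`, which is positive for `c > 0`, gives both claims.
-/

theorem Real.exp_two_mul_mul (a b : ℝ) : exp (2 * a * b) = exp (a * b) ^ 2 := by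
  rw [mul_assoc, ← exp_nat_mul]
  norm_num

theorem HasDerivAt.arctan_div {f g : ℝ → ℝ} {f' g' x : ℝ} (hf : HasDerivAt f f' x)
    (hg : HasDerivAt g g' x) (hx : g x ≠ 0) :
    HasDerivAt (fun y => Real.arctan (f y / g y))
      ((f' * g x - f x * g') / (f x ^ 2 + g x ^ 2)) x := by
  refine (HasDerivAt.arctan (hf.div hg hx)).congr_deriv ?_
  simp only [Pi.div_apply]
  field_simp
  ring

theorem Real.sin_sq_arctan_div {a b : ℝ} (hb : b ≠ 0) :
    sin (arctan (a / b)) ^ 2 = a ^ 2 / (a ^ 2 + b ^ 2) := by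
  rw [sin_sq_arctan]
  field_simp
  ring

theorem hasDerivAt_thetaS {c u : ℝ} (hu : 1 - c ^ 2 + exp (2 * c * u) ≠ 0) :
    HasDerivAt (thetaS c)
      (2 * c ^ 2 * exp (c * u) * (1 - c ^ 2 - exp (c * u) ^ 2) /
        ((2 * c * exp (c * u)) ^ 2 + (1 - c ^ 2 + exp (c * u) ^ 2) ^ 2)) u := by
  have hN : HasDerivAt (fun x => 2 * c * exp (c * x)) (2 * c * (exp (c * u) * c)) u :=
    (((hasDerivAt_id u).const_mul c).exp.const_mul (2 * c)).congr_deriv (by simp)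
  have hD : HasDerivAt (fun x => 1 - c ^ 2 + exp (2 * c * x)) (exp (2 * c * u) * (2 * c)) u :=
    (((hasDerivAt_id u).const_mul (2 * c)).exp.const_add _).congr_deriv (by simp)
  refine (HasDerivAt.arctan_div hN hD hu).congr_deriv ?_
  rw [exp_two_mul_mul]
  ring

theorem deriv_thetaS_sq_add_sin_pow_four {c u : ℝ} (hu : 1 - c ^ 2 + exp (2 * c * u) ≠ 0) :
    deriv (thetaS c) u ^ 2 + sin (thetaS c u) ^ 4 = c ^ 2 * sin (thetaS c u) ^ 2 := by
  have hsin : sin (thetaS c u) ^ 4 = (sin (thetaS c u) ^ 2) ^ 2 := by ring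
  rw [(hasDerivAt_thetaS hu).deriv, hsin, thetaS, sin_sq_arctan_div hu, exp_two_mul_mul]
  rw [exp_two_mul_mul] at hu
  generalize exp (c * u) = E at hu ⊢
  have hpos : 0 < (2 * c * E) ^ 2 + (1 - c ^ 2 + E ^ 2) ^ 2 := by positivity
  field_simp
  ring

/-- With θ(u) = arctan(2c e^{cu}/(1−c²+e^{2cu})) (where 1−c²+e^{2cu} > 0) and
λ = θ'/sin θ, one has λ² + sin²θ = c² and θ' = λ sin θ. -/
theorem theta_lambda_solution_sphere (c : ℝ) (hc : 0 < c) (u : ℝ)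
    (hu : 1 - c^2 + exp (2 * c * u) > 0) :
    lamS c u ^ 2 + sin (thetaS c u) ^ 2 = c ^ 2
    ∧ deriv (thetaS c) u = lamS c u * sin (thetaS c u) := by
  have hsin : 0 < sin (thetaS c u) := by unfold thetaS; positivity
  have key := deriv_thetaS_sq_add_sin_pow_four hu.ne'
  refine ⟨?_, (div_mul_cancel₀ _ hsin.ne').symm⟩
  rw [lamS, div_pow]
  field_simp
  linear_combination key
end

section
/- Let f : I → ℝ be a positive smooth solution of f'(u)² = f(u)²(c² + (c²−1)f(u)²) with f' nowhere zero, where c > 0. Then on I, f(u) = 2c e^{±cu+d}/(1−c²+e^{2(±cu+d)}) for some constant d, for one fixed choice of sign. -/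
/-!
By Darboux's theorem `f'` has a constant sign `σ`, so the equation becomes
`f' = σ f √(c² + (c² - 1) f²)`. The function `x ↦ log ((c + √(c² + (c² - 1) x²)) / x)` is a
primitive of `-c / (x √(c² + (c² - 1) x²))`, hence along the solution it is affine in `u` with
slope `-σ c`. Inverting it: with `E = exp t`, squaring `E x - c = √(c² + (c² - 1) x²)` gives
`(1 - c² + E²) x = 2 c E`.
-/

open Real

noncomputable def separationPrimitive (c x : ℝ) : ℝ :=
  log ((c + √(c ^ 2 + (c ^ 2 - 1) * x ^ 2)) / x)

theorem hasDerivAt_separationPrimitive {c x : ℝ} (hc : 0 < c) (hx : 0 < x)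
    (hR : 0 < c ^ 2 + (c ^ 2 - 1) * x ^ 2) :
    HasDerivAt (separationPrimitive c) (-c / (x * √(c ^ 2 + (c ^ 2 - 1) * x ^ 2))) x := by
  set s := √(c ^ 2 + (c ^ 2 - 1) * x ^ 2) with hs
  have hs2 : s ^ 2 = c ^ 2 + (c ^ 2 - 1) * x ^ 2 := sq_sqrt hR.le
  have hs0 : 0 < s := sqrt_pos.2 hR
  have hR' : HasDerivAt (fun y => c ^ 2 + (c ^ 2 - 1) * y ^ 2) ((c ^ 2 - 1) * (2 * x)) x := by
    simpa using ((hasDerivAt_pow 2 x).const_mul (c ^ 2 - 1)).const_add (c ^ 2)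
  have hq := ((hR'.sqrt hR.ne').const_add c).div (hasDerivAt_id' x) hx.ne'
  have hcs : 0 < (c + s) / x := div_pos (by positivity) hx
  refine (hq.log hcs.ne').congr_deriv ?_
  rw [Pi.div_apply, ← hs]
  field_simp
  linear_combination -hs2

theorem eq_of_separationPrimitive_eq {c x t : ℝ} (hc : 0 < c) (hx : 0 < x)
    (hR : 0 ≤ c ^ 2 + (c ^ 2 - 1) * x ^ 2) (h : separationPrimitive c x = t) :
    x = 2 * c * exp t / (1 - c ^ 2 + exp (2 * t)) := by
  set s := √(c ^ 2 + (c ^ 2 - 1) * x ^ 2) with hs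
  have hs2 : s ^ 2 = c ^ 2 + (c ^ 2 - 1) * x ^ 2 := sq_sqrt hR
  have hcs : 0 < c + s := by positivity
  have hE : exp t * x = c + s := by
    rw [← h, separationPrimitive, ← hs, exp_log (div_pos hcs hx), div_mul_cancel₀ _ hx.ne']
  have hmain : (1 - c ^ 2 + exp t ^ 2) * x = 2 * c * exp t := by
    refine mul_right_cancel₀ hx.ne' ?_
    linear_combination (exp t * x + c + s - 2 * c) * hE + hs2
  have hden : 0 < 1 - c ^ 2 + exp t ^ 2 :=
    pos_of_mul_pos_left (hmain ▸ by positivity) hx.le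
  rw [mul_comm 2 t, exp_mul, rpow_two, eq_div_iff hden.ne']
  linear_combination hmain

theorem IsOpen.exists_eq_mul_add_of_hasDerivAt {s : Set ℝ} (hs : IsOpen s)
    (hs' : IsPreconnected s) {g : ℝ → ℝ} {k : ℝ} (hg : ∀ x ∈ s, HasDerivAt g k x) :
    ∃ d, ∀ x ∈ s, g x = k * x + d :=
  hs.exists_eq_add_of_deriv_eq hs' (fun x hx => (hg x hx).differentiableAt.differentiableWithinAt)
    (differentiableOn_id.const_mul k) fun x hx => by simp [(hg x hx).deriv]

theorem Convex.exists_sign_mul_eq_of_hasDerivAt {s : Set ℝ} (hs : Convex ℝ s) {f f' g : ℝ → ℝ}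
    (hf : ∀ x ∈ s, HasDerivAt f (f' x) x) (hf' : ∀ x ∈ s, f' x ≠ 0)
    (hg : ∀ x ∈ s, 0 ≤ g x) (hsq : ∀ x ∈ s, f' x ^ 2 = g x ^ 2) :
    ∃ σ : ℝ, (σ = 1 ∨ σ = -1) ∧ ∀ x ∈ s, f' x = σ * g x := by
  rcases hasDerivWithinAt_forall_lt_or_forall_gt_of_forall_ne hs
    (fun x hx => (hf x hx).hasDerivWithinAt) hf' with hneg | hpos
  · refine ⟨-1, Or.inr rfl, fun x hx => ?_⟩
    have := (pow_left_inj₀ (neg_nonneg.2 (hneg x hx).le) (hg x hx) two_ne_zero).1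
      (by rw [neg_sq, hsq x hx])
    linarith
  · refine ⟨1, Or.inl rfl, fun x hx => ?_⟩
    rw [one_mul]
    exact (pow_left_inj₀ (hpos x hx).le (hg x hx) two_ne_zero).1 (hsq x hx)

theorem ode_solution_f_general
    (c : ℝ) (hc : 0 < c) (a b : ℝ)
    (f f' : ℝ → ℝ)
    (hder : ∀ u ∈ Set.Ioo a b, HasDerivAt f (f' u) u)
    (hpos : ∀ u ∈ Set.Ioo a b, 0 < f u)
    (hode : ∀ u ∈ Set.Ioo a b, (f' u)^2 = (f u)^2 * (c^2 + (c^2 - 1) * (f u)^2))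
    (hne : ∀ u ∈ Set.Ioo a b, f' u ≠ 0) :
    ∃ ε : ℝ, (ε = 1 ∨ ε = -1) ∧ ∃ d : ℝ, ∀ u ∈ Set.Ioo a b,
      f u = 2 * c * exp (ε * c * u + d) / (1 - c^2 + exp (2 * (ε * c * u + d))) := by
  have hR : ∀ u ∈ Set.Ioo a b, 0 < c ^ 2 + (c ^ 2 - 1) * f u ^ 2 := fun u hu =>
    pos_of_mul_pos_right (hode u hu ▸ pow_two_pos_of_ne_zero (hne u hu)) (sq_nonneg _)
  obtain ⟨σ, hσ, hf'⟩ := (convex_Ioo a b).exists_sign_mul_eq_of_hasDerivAt hder hne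
    (g := fun u => f u * √(c ^ 2 + (c ^ 2 - 1) * f u ^ 2))
    (fun u hu => mul_nonneg (hpos u hu).le (sqrt_nonneg _))
    fun u hu => by rw [hode u hu, mul_pow, sq_sqrt (hR u hu).le]
  have hsep : ∀ u ∈ Set.Ioo a b,
      HasDerivAt (fun u => separationPrimitive c (f u)) (-σ * c) u := by
    intro u hu
    refine ((hasDerivAt_separationPrimitive hc (hpos u hu) (hR u hu)).comp u
      (hder u hu)).congr_deriv ?_
    have : f u * √(c ^ 2 + (c ^ 2 - 1) * f u ^ 2) ≠ 0 :=
      (mul_pos (hpos u hu) (sqrt_pos.2 (hR u hu))).ne'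
    rw [hf' u hu, mul_comm σ, ← mul_assoc, div_mul_cancel₀ _ this]
    ring
  obtain ⟨d, hd⟩ := isOpen_Ioo.exists_eq_mul_add_of_hasDerivAt isPreconnected_Ioo hsep
  refine ⟨-σ, by rcases hσ with rfl | rfl <;> norm_num, d, fun u hu => ?_⟩
  exact eq_of_separationPrimitive_eq hc (hpos u hu) (hR u hu).le (hd u hu)

/-- A positive solution of f'² = f²(c² + (c²−1)f²) with f' nowhere zero on an interval
is f(u) = 2c e^{±cu+d}/(1−c²+e^{2(±cu+d)}) for some constant d and a fixed sign. -/
theorem ode_solution_f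
    (c : ℝ) (hc : 0 < c) (a b : ℝ) (hab : a < b)
    (f f' : ℝ → ℝ)
    (hder : ∀ u ∈ Set.Ioo a b, HasDerivAt f (f' u) u)
    (hcont : ContinuousOn f' (Set.Ioo a b))
    (hpos : ∀ u ∈ Set.Ioo a b, 0 < f u)
    (hode : ∀ u ∈ Set.Ioo a b, (f' u)^2 = (f u)^2 * (c^2 + (c^2 - 1) * (f u)^2))
    (hne : ∀ u ∈ Set.Ioo a b, f' u ≠ 0)
    (hrad : ∀ u ∈ Set.Ioo a b, 0 < c^2 + (c^2 - 1) * (f u)^2) :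
    ∃ ε : ℝ, (ε = 1 ∨ ε = -1) ∧ ∃ d : ℝ, ∀ u ∈ Set.Ioo a b,
      f u = 2 * c * exp (ε * c * u + d) / (1 - c^2 + exp (2 * (ε * c * u + d))) :=
  ode_solution_f_general c hc a b f f' hder hpos hode hne
end
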